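/- Replacing the block 100 by 011 preserves value in base φ: for any position k, 1/φ^k = 1/φ^{k+1} + 1/φ^{k+2}. Consequently, for every h ≥ 0 the number of binary words of length h+1 having the same value as the word 10^h (a 1 followed by h zeros) equals 1 + ⌊h/2⌋. -/

import Mathlib

/-!
Reading off the first letter `a` of a word of value `x` leaves a word of value `φ x - a`, so the
number `N n x` of words of length `n` and value `x` satisfies `N (n + 1) x = N n (φ x) + N n (φ x - 1)`.
As `0 ≤ val c < φ`, we have `N n 0 = 1` and `N n φ = 0`; together with `φ - 1 = φ⁻¹` this gives
`N (n + 1) φ⁻¹ = N n 1 + 1` and `N (n + 1) 1 = N n φ⁻¹`, hence `N n φ⁻¹ = ⌊(n + 1) / 2⌋`.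
The substitution rule is `φ² = φ + 1` divided by `φ ^ (k + 2)`.
-/

noncomputable def phi : ℝ := (1 + Real.sqrt 5) / 2

/-- Value of a binary word in base φ. -/
noncomputable def val {n : ℕ} (c : Fin n → Fin 2) : ℝ :=
  ∑ i : Fin n, (c i : ℕ) / phi ^ ((i : ℕ) + 1)

lemma phi_eq_goldenRatio : phi = Real.goldenRatio := rfl

lemma phi_pos : 0 < phi := phi_eq_goldenRatio ▸ Real.goldenRatio_pos

lemma phi_sq : phi ^ 2 = phi + 1 := phi_eq_goldenRatio ▸ Real.goldenRatio_sq

lemma inv_phi : phi⁻¹ = phi - 1 := by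
  have := phi_pos.ne'
  field_simp
  linear_combination -phi_sq

lemma one_div_phi_pow_eq_add (k : ℕ) :
    1 / phi ^ k = 1 / phi ^ (k + 1) + 1 / phi ^ (k + 2) := by
  have := phi_pos.ne'
  rw [pow_succ, pow_add]
  field_simp
  linear_combination phi_sq

lemma val_cons {n : ℕ} (a : Fin 2) (d : Fin n → Fin 2) :
    val (Fin.cons a d : Fin (n + 1) → Fin 2) = ((a : ℕ) + val d) / phi := by
  simp only [val, Fin.sum_univ_succ, Fin.cons_zero, Fin.cons_succ, Fin.val_zero, Fin.val_succ,
    add_div, Finset.sum_div, pow_succ, div_div, pow_zero, one_mul]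

lemma val_zero (n : ℕ) : val (0 : Fin n → Fin 2) = 0 := by
  simp [val]

lemma val_nonneg {n : ℕ} (c : Fin n → Fin 2) : 0 ≤ val c := by
  have := phi_pos
  unfold val
  positivity

lemma val_lt_phi {n : ℕ} (c : Fin n → Fin 2) : val c < phi := by
  induction c using Fin.consInduction with
  | elim0 => simpa [val] using phi_pos
  | cons a d ih =>
    have ha : ((a : ℕ) : ℝ) ≤ 1 := by exact_mod_cast Nat.le_of_lt_succ a.isLt
    rw [val_cons, div_lt_iff₀ phi_pos, ← pow_two, phi_sq]
    linarith

lemma val_one_followed_by_zeros (n : ℕ) :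
    val (fun i : Fin (n + 1) => if i = 0 then (1 : Fin 2) else 0) = phi⁻¹ := by
  have : (fun i : Fin (n + 1) => if i = 0 then (1 : Fin 2) else 0) = Fin.cons 1 0 := by
    ext i
    cases i using Fin.cases <;> simp
  rw [this, val_cons, val_zero]
  simp

/-- `valClass n (val w)` is the class `[w]` of a word `w` of length `n`. -/
def valClass (n : ℕ) (x : ℝ) : Set (Fin n → Fin 2) := {c | val c = x}

lemma valClass_succ (n : ℕ) (x : ℝ) :
    valClass (n + 1) x =
      Fin.cons 0 '' valClass n (phi * x) ∪ Fin.cons 1 '' valClass n (phi * x - 1) := by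
  ext c
  induction c using Fin.consCases with
  | cons a d =>
    have hphi := phi_pos.ne'
    fin_cases a <;> simp [valClass, Fin.cons_inj, val_cons] <;> rw [div_eq_iff hphi] <;>
      constructor <;> intro <;> linarith

lemma ncard_valClass_succ (n : ℕ) (x : ℝ) :
    (valClass (n + 1) x).ncard =
      (valClass n (phi * x)).ncard + (valClass n (phi * x - 1)).ncard := by
  rw [valClass_succ, Set.ncard_union_eq, Set.ncard_image_of_injective _ (Fin.cons_right_injective _),
    Set.ncard_image_of_injective _ (Fin.cons_right_injective _)]
  exact Set.disjoint_image_image fun _ _ _ _ h => by simp [Fin.cons_inj] at h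

lemma valClass_of_neg {n : ℕ} {x : ℝ} (hx : x < 0) : valClass n x = ∅ :=
  Set.eq_empty_of_forall_notMem fun c hc => (val_nonneg c).not_gt (hc.symm ▸ hx)

lemma valClass_phi (n : ℕ) : valClass n phi = ∅ :=
  Set.eq_empty_of_forall_notMem fun c hc => (val_lt_phi c).ne hc

lemma ncard_valClass_zero : ∀ n : ℕ, (valClass n 0).ncard = 1
  | 0 => Set.ncard_eq_one.mpr ⟨0, by ext c; simp [valClass, val, Subsingleton.elim c 0]⟩
  | n + 1 => by
    rw [ncard_valClass_succ, mul_zero, zero_sub, valClass_of_neg neg_one_lt_zero, Set.ncard_empty,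
      ncard_valClass_zero n]

lemma ncard_valClass_inv_phi_and_one : ∀ n : ℕ,
    (valClass n phi⁻¹).ncard = (n + 1) / 2 ∧ (valClass n 1).ncard = n / 2
  | 0 => by simp [valClass, val, phi_pos.ne]
  | n + 1 => by
    obtain ⟨ih_inv, ih_one⟩ := ncard_valClass_inv_phi_and_one n
    rw [ncard_valClass_succ, ncard_valClass_succ, mul_inv_cancel₀ phi_pos.ne', mul_one, sub_self,
      ← inv_phi, valClass_phi, Set.ncard_empty, ncard_valClass_zero, ih_inv, ih_one]
    omega

theorem substitution_and_class_of_one_zeros :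
    (∀ k : ℕ, 1 / phi ^ k = 1 / phi ^ (k + 1) + 1 / phi ^ (k + 2)) ∧
    ∀ h : ℕ,
      Nat.card {c : Fin (h + 1) → Fin 2 //
        val c = val (fun i : Fin (h + 1) => if i = 0 then 1 else 0)} = 1 + h / 2 := by
  refine ⟨one_div_phi_pow_eq_add, fun h => ?_⟩
  change Nat.card (valClass (h + 1) (val _)) = _
  rw [val_one_followed_by_zeros, Nat.card_coe_set_eq, (ncard_valClass_inv_phi_and_one (h + 1)).1]
  omega
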